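/- Let $b \in \mathbb{R}^d$, $c \in M_d(\mathbb{R})$ symmetric, $F$ a measure on $\mathbb{R}^d$ with $\int (1 \wedge |x|^2)\,dF < \infty$, and $h$ a truncation function. Suppose $\vartheta, u \in \mathbb{R}^d$ are such that $\int_{\{|x|>1\}} e^{\langle \vartheta, x\rangle} dF < \infty$ and $\int_{\{|x|>1\}} e^{\langle \vartheta + zu, x\rangle} dF < \infty$ for a real $z$. Define $\kappa(v) = \langle v, b\rangle + \tfrac12\langle v, cv\rangle + \int (e^{\langle v,x\rangle} - 1 - \langle v, h(x)\rangle) dF$, and define the tilted characteristics $b^u = \langle u, b\rangle + \langle u, c\vartheta\rangle + \int (h_1(\langle u,x\rangle) e^{\langle\vartheta,x\rangle} - \langle u, h(x)\rangle) dF$, $c^u = \langle u, cu\rangle$, $F^u(E) = \int \mathbf{1}_E(\langle u,x\rangle) e^{\langle \vartheta,x\rangle} dF(x)$, with one-dimensional cumulant $\kappa^u(z) = z b^u + \tfrac12 z^2 c^u + \int (e^{zy} - 1 - z h_1(y))\, dF^u(y)$. Then $\kappa(\vartheta) + \kappa^u(z) = \kappa(\vartheta + zu)$. -/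

import Mathlib

/-!
Since `exp ⟨ϑ + z u, x⟩ = exp (z ⟨u, x⟩) · exp ⟨ϑ, x⟩`, the jump integrand of `κ(ϑ + z u)` is
pointwise the sum of those of `κ(ϑ)`, of `z b^u` and of `κ^u(z)`: the `h₁` terms cancel. The
drift is linear in `v`, and by symmetry of `c` the quadratic form at `ϑ + z u` is the one at `ϑ`
plus `2 z ⟨u, c ϑ⟩ + z² c^u`, whose halves are the Gaussian parts of `z b^u` and `κ^u(z)`.
-/

open MeasureTheory

/-- The real Laplace cumulant of a `d`-dimensional triplet `(b, c, F)` with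
truncation function `h`. -/
noncomputable def laplaceCumulant {d : ℕ} (b : Fin d → ℝ)
    (c : Matrix (Fin d) (Fin d) ℝ) (F : Measure (Fin d → ℝ))
    (h : (Fin d → ℝ) → (Fin d → ℝ)) (v : Fin d → ℝ) : ℝ :=
  (∑ i, v i * b i) + (1 / 2) * (∑ i, ∑ j, v i * c i j * v j) +
    ∫ x, (Real.exp (∑ i, v i * x i) - 1 - ∑ i, v i * h x i) ∂F

lemma sum_add_smul_mul {ι R : Type*} [Fintype ι] [CommSemiring R] (v u x : ι → R) (z : R) :
    ∑ i, (v + z • u) i * x i = ∑ i, v i * x i + z * ∑ i, u i * x i := by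
  simp only [Pi.add_apply, Pi.smul_apply, smul_eq_mul, add_mul, Finset.sum_add_distrib,
    Finset.mul_sum, mul_assoc]

namespace Matrix.IsSymm

variable {ι R : Type*} [Fintype ι]

lemma sum_sum_mul_mul_comm [CommSemiring R] {c : Matrix ι ι R} (hc : c.IsSymm) (v w : ι → R) :
    ∑ i, ∑ j, v i * c i j * w j = ∑ i, ∑ j, w i * c i j * v j := by
  rw [Finset.sum_comm]
  refine Finset.sum_congr rfl fun j _ => Finset.sum_congr rfl fun i _ => ?_
  rw [hc.apply i j]
  ring

lemma sum_sum_add_smul_mul_mul [CommRing R] {c : Matrix ι ι R} (hc : c.IsSymm)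
    (v u : ι → R) (z : R) :
    ∑ i, ∑ j, (v + z • u) i * c i j * (v + z • u) j =
      ∑ i, ∑ j, v i * c i j * v j + 2 * z * ∑ i, ∑ j, u i * c i j * v j +
        z ^ 2 * ∑ i, ∑ j, u i * c i j * u j := by
  have expand : ∀ i j, (v + z • u) i * c i j * (v + z • u) j =
      v i * c i j * v j + z * (v i * c i j * u j) + z * (u i * c i j * v j) +
        z ^ 2 * (u i * c i j * u j) := fun i j => by
    simp only [Pi.add_apply, Pi.smul_apply, smul_eq_mul]
    ring
  simp_rw [expand, Finset.sum_add_distrib, ← Finset.mul_sum]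
  rw [hc.sum_sum_mul_mul_comm v u]
  ring

end Matrix.IsSymm

lemma Real.exp_add_mul_sub_one_sub_add_mul (a y s t z k : ℝ) :
    exp (a + z * y) - 1 - (s + z * t) =
      (exp a - 1 - s) + z * (k * exp a - t) + (exp (z * y) - 1 - z * k) * exp a := by
  rw [exp_add]
  ring

theorem laplaceCumulant_esscher_additivity_general
    {d : ℕ} (b : Fin d → ℝ) (c : Matrix (Fin d) (Fin d) ℝ) (hc : c.IsSymm)
    (F : Measure (Fin d → ℝ))
    (h : (Fin d → ℝ) → (Fin d → ℝ)) (h₁ : ℝ → ℝ)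
    (ϑ u : Fin d → ℝ) (z : ℝ)
    -- integrability of the integrands appearing in the cumulants:
    (hi1 : Integrable (fun x => Real.exp (∑ i, ϑ i * x i) - 1 - ∑ i, ϑ i * h x i) F)
    (hi3 : Integrable (fun x =>
        h₁ (∑ i, u i * x i) * Real.exp (∑ i, ϑ i * x i) - ∑ i, u i * h x i) F)
    (hi4 : Integrable (fun x =>
        (Real.exp (z * ∑ i, u i * x i) - 1 - z * h₁ (∑ i, u i * x i)) *
          Real.exp (∑ i, ϑ i * x i)) F) :
    laplaceCumulant b c F h ϑ +
      -- κ^u(z) = z b^u + ½ z² c^u + ∫ (e^{zy} - 1 - z h₁(y)) dF^u(y):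
      (z * ((∑ i, u i * b i) + (∑ i, ∑ j, u i * c i j * ϑ j) +
          ∫ x, (h₁ (∑ i, u i * x i) * Real.exp (∑ i, ϑ i * x i) - ∑ i, u i * h x i) ∂F) +
        (1 / 2) * z ^ 2 * (∑ i, ∑ j, u i * c i j * u j) +
        ∫ x, (Real.exp (z * ∑ i, u i * x i) - 1 - z * h₁ (∑ i, u i * x i)) *
          Real.exp (∑ i, ϑ i * x i) ∂F) =
      laplaceCumulant b c F h (ϑ + z • u) := by
  have integrand_split : ∀ x : Fin d → ℝ,
      Real.exp (∑ i, (ϑ + z • u) i * x i) - 1 - ∑ i, (ϑ + z • u) i * h x i =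
        (Real.exp (∑ i, ϑ i * x i) - 1 - ∑ i, ϑ i * h x i) +
          z * (h₁ (∑ i, u i * x i) * Real.exp (∑ i, ϑ i * x i) - ∑ i, u i * h x i) +
          (Real.exp (z * ∑ i, u i * x i) - 1 - z * h₁ (∑ i, u i * x i)) *
            Real.exp (∑ i, ϑ i * x i) := fun x => by
    rw [sum_add_smul_mul, sum_add_smul_mul]
    exact Real.exp_add_mul_sub_one_sub_add_mul ..
  have integral_split :
      ∫ x, (Real.exp (∑ i, (ϑ + z • u) i * x i) - 1 - ∑ i, (ϑ + z • u) i * h x i) ∂F =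
        (∫ x, (Real.exp (∑ i, ϑ i * x i) - 1 - ∑ i, ϑ i * h x i) ∂F) +
          z * (∫ x, (h₁ (∑ i, u i * x i) * Real.exp (∑ i, ϑ i * x i) - ∑ i, u i * h x i) ∂F) +
          ∫ x, (Real.exp (z * ∑ i, u i * x i) - 1 - z * h₁ (∑ i, u i * x i)) *
            Real.exp (∑ i, ϑ i * x i) ∂F := by
    simp_rw [integrand_split]
    rw [integral_add ?_ hi4, integral_add hi1 (hi3.const_mul z), integral_const_mul]
    exact hi1.add (hi3.const_mul z)
  rw [laplaceCumulant, laplaceCumulant, integral_split, sum_add_smul_mul,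
    hc.sum_sum_add_smul_mul_mul]
  ring

/-- Continuous-characteristics case of identity (4.26): additivity of the Laplace
cumulant under the Esscher transform, `κ(ϑ) + κ^u(z) = κ(ϑ + z u)`. -/
theorem laplaceCumulant_esscher_additivity
    {d : ℕ} (b : Fin d → ℝ) (c : Matrix (Fin d) (Fin d) ℝ) (hc : c.IsSymm)
    (F : Measure (Fin d → ℝ))
    (hF : ∫⁻ x, ENNReal.ofReal (min 1 (‖x‖ ^ 2)) ∂F < ⊤)
    (h : (Fin d → ℝ) → (Fin d → ℝ)) (h₁ : ℝ → ℝ)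
    (ϑ u : Fin d → ℝ) (z : ℝ)
    -- exponential moment conditions:
    (hϑ : ∫⁻ x in {x | 1 < ‖x‖}, ENNReal.ofReal (Real.exp (∑ i, ϑ i * x i)) ∂F < ⊤)
    (hϑzu : ∫⁻ x in {x | 1 < ‖x‖},
        ENNReal.ofReal (Real.exp (∑ i, (ϑ i + z * u i) * x i)) ∂F < ⊤)
    -- integrability of the integrands appearing in the cumulants:
    (hi1 : Integrable (fun x => Real.exp (∑ i, ϑ i * x i) - 1 - ∑ i, ϑ i * h x i) F)
    (hi2 : Integrable (fun x =>
        Real.exp (∑ i, (ϑ i + z * u i) * x i) - 1 - ∑ i, (ϑ i + z * u i) * h x i) F)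
    (hi3 : Integrable (fun x =>
        h₁ (∑ i, u i * x i) * Real.exp (∑ i, ϑ i * x i) - ∑ i, u i * h x i) F)
    (hi4 : Integrable (fun x =>
        (Real.exp (z * ∑ i, u i * x i) - 1 - z * h₁ (∑ i, u i * x i)) *
          Real.exp (∑ i, ϑ i * x i)) F) :
    laplaceCumulant b c F h ϑ +
      -- κ^u(z) = z b^u + ½ z² c^u + ∫ (e^{zy} - 1 - z h₁(y)) dF^u(y):
      (z * ((∑ i, u i * b i) + (∑ i, ∑ j, u i * c i j * ϑ j) +
          ∫ x, (h₁ (∑ i, u i * x i) * Real.exp (∑ i, ϑ i * x i) - ∑ i, u i * h x i) ∂F) +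
        (1 / 2) * z ^ 2 * (∑ i, ∑ j, u i * c i j * u j) +
        ∫ x, (Real.exp (z * ∑ i, u i * x i) - 1 - z * h₁ (∑ i, u i * x i)) *
          Real.exp (∑ i, ϑ i * x i) ∂F) =
      laplaceCumulant b c F h (ϑ + z • u) :=
  laplaceCumulant_esscher_additivity_general b c hc F h h₁ ϑ u z hi1 hi3 hi4
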